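/- Fix a real number q > 1 and δ ∈ [−1/2, 0). Then for every integer m ≥ 1: (a) φ_{iδ}(2m) is a positive real number; (b) for every real α with −τ/2 < α < τ/2 and α ≠ 0, |φ_{α+iδ}(2m)| < φ_{iδ}(2m); and (c) φ_{τ/2+iδ}(2m) = φ_{iδ}(2m). -/

import Mathlib

/-- `q^w = exp(w log q)`. -/
noncomputable def qpow (q : ℝ) (w : ℂ) : ℂ := Complex.exp (w * (Real.log q : ℂ))

/-- `τ = 2π / log q`. -/
noncomputable def tauq (q : ℝ) : ℝ := 2 * Real.pi / Real.log q

/-- The elementary spherical function value `φ_z(n)` on a homogeneous tree of degree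
`q+1`: `φ_z(0) = 1` and for `n ≥ 1`,
`φ_z(n) = (1/(q+1))·[q^{1-n/2}(q^{iz(n+1)} - q^{-iz(n+1)}) - q^{-n/2}(q^{iz(n-1)} - q^{-iz(n-1)})] / (q^{iz} - q^{-iz})`. -/
noncomputable def phiSph (q : ℝ) (z : ℂ) (n : ℕ) : ℂ :=
  if n = 0 then 1 else
    (1 / ((q : ℂ) + 1)) *
      ((qpow q (1 - (n : ℂ) / 2) *
          (qpow q (Complex.I * z * ((n : ℂ) + 1)) - qpow q (-(Complex.I * z) * ((n : ℂ) + 1))) -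
        qpow q (-(n : ℂ) / 2) *
          (qpow q (Complex.I * z * ((n : ℂ) - 1)) - qpow q (-(Complex.I * z) * ((n : ℂ) - 1)))) /
        (qpow q (Complex.I * z) - qpow q (-(Complex.I * z))))

/-!
Put `w = q^{2iz}`. Clearing the denominator `q^{iz} - q^{-iz}` turns `φ_z(2m)` into
`w^{-m} P(w) / ((q+1) q^m)` with `P(w) = (q-1)(1 + w + ⋯ + w^{2m}) + w^{2m} + 1`, a polynomial
with positive coefficients. For `z = α + iδ` we have `w = r e^{2iα log q}` with `r = q^{-2δ} > 1`,
so `|w^{-m}| = r^{-m}` does not depend on `α`, while `|P(w)| ≤ P(r)`, strictly unless `w` is a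
positive real, i.e. unless `2α log q ∈ 2πℤ`. For `|α| < τ/2` this happens only at `α = 0`, and
`α = τ/2` gives `w = r` again.
-/

open Complex Finset

section SphPoly

variable {R : Type*} [CommRing R]

def sphPoly (q : R) (m : ℕ) (w : R) : R :=
  (q - 1) * ∑ j ∈ range (2 * m + 1), w ^ j + w ^ (2 * m) + 1

theorem sub_one_mul_sphPoly (q : R) (m : ℕ) (w : R) :
    (w - 1) * sphPoly q m w = q * (w ^ (2 * m + 1) - 1) - w ^ (2 * m) + w := by
  rw [sphPoly]
  linear_combination (q - 1) * mul_comm (w - 1) _ + (q - 1) * geom_sum_mul w (2 * m + 1)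

end SphPoly

theorem Complex.norm_one_add_lt {w : ℂ} (hw : w.re < ‖w‖) : ‖1 + w‖ < 1 + ‖w‖ := by
  refine lt_of_pow_lt_pow_left₀ 2 (by positivity) ?_
  have hsq : ‖w‖ ^ 2 = w.re ^ 2 + w.im ^ 2 := by rw [Complex.sq_norm, normSq_apply]; ring
  rw [Complex.sq_norm, normSq_apply]
  simp only [add_re, add_im, one_re, one_im]
  nlinarith

theorem Complex.norm_geom_sum_lt {w : ℂ} (hw : w.re < ‖w‖) {n : ℕ} (hn : 1 ≤ n) :
    ‖∑ j ∈ range (n + 1), w ^ j‖ < ∑ j ∈ range (n + 1), ‖w‖ ^ j := by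
  induction n, hn using Nat.le_induction with
  | base => simpa [sum_range_succ, add_comm] using norm_one_add_lt hw
  | succ n _ ih =>
    rw [sum_range_succ, sum_range_succ _ (n + 1)]
    calc ‖∑ j ∈ range (n + 1), w ^ j + w ^ (n + 1)‖
        ≤ ‖∑ j ∈ range (n + 1), w ^ j‖ + ‖w‖ ^ (n + 1) := by
          simpa only [norm_pow] using norm_add_le _ (w ^ (n + 1))
      _ < _ := by linarith

theorem norm_sphPoly_lt {q : ℝ} (hq : 1 < q) {m : ℕ} (hm : 1 ≤ m) {w : ℂ} (hw : w.re < ‖w‖) :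
    ‖sphPoly (q : ℂ) m w‖ < sphPoly q m ‖w‖ := by
  have hgeom := Complex.norm_geom_sum_lt hw (by omega : 1 ≤ 2 * m)
  calc ‖sphPoly (q : ℂ) m w‖
      ≤ (q - 1) * ‖∑ j ∈ range (2 * m + 1), w ^ j‖ + ‖w‖ ^ (2 * m) + 1 := by
        rw [sphPoly]
        refine norm_add₃_le.trans ?_
        rw [norm_mul, norm_pow, norm_one, ← ofReal_one, ← ofReal_sub, norm_real,
          Real.norm_of_nonneg (by linarith)]
    _ < sphPoly q m ‖w‖ := by
        rw [sphPoly]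
        gcongr

theorem sphPoly_pos {q : ℝ} (hq : 1 ≤ q) (m : ℕ) {x : ℝ} (hx : 0 ≤ x) : 0 < sphPoly q m x := by
  have : 0 ≤ (q - 1) * ∑ j ∈ range (2 * m + 1), x ^ j := by
    have := sub_nonneg.mpr hq
    positivity
  rw [sphPoly]
  positivity

theorem sphPoly_ofReal (q : ℝ) (m : ℕ) (x : ℝ) : sphPoly (q : ℂ) m x = (sphPoly q m x : ℝ) := by
  simp [sphPoly]

theorem qpow_add (q : ℝ) (a b : ℂ) : qpow q (a + b) = qpow q a * qpow q b := by
  rw [qpow, qpow, qpow, ← exp_add, add_mul]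

theorem qpow_neg (q : ℝ) (a : ℂ) : qpow q (-a) = (qpow q a)⁻¹ := by
  rw [qpow, qpow, ← exp_neg, neg_mul]

theorem qpow_mul_natCast (q : ℝ) (a : ℂ) (n : ℕ) : qpow q (a * n) = qpow q a ^ n := by
  rw [qpow, qpow, ← exp_nat_mul, mul_right_comm, mul_comm]

theorem qpow_one {q : ℝ} (hq : 0 < q) : qpow q 1 = q := by
  rw [qpow, one_mul, ← ofReal_exp, Real.exp_log hq]

theorem phiSph_two_mul (q : ℝ) (hq : 0 < q) (z : ℂ) {m : ℕ} (hm : 1 ≤ m)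
    (hz : qpow q (I * z) ^ 2 ≠ 1) :
    phiSph q z (2 * m) = (((q : ℂ) + 1) * (q : ℂ) ^ m)⁻¹ * ((qpow q (I * z) ^ 2) ^ m)⁻¹ *
      sphPoly (q : ℂ) m (qpow q (I * z) ^ 2) := by
  obtain ⟨k, rfl⟩ := Nat.exists_eq_add_of_le' hm
  have hq' : (q : ℂ) + 1 ≠ 0 := by exact_mod_cast (by linarith : q + 1 ≠ 0)
  have hq0 : (q : ℂ) ≠ 0 := by exact_mod_cast hq.ne'
  rw [phiSph, if_neg (by omega)]
  -- each exponent as a natural multiple of `iz` or of `1`, so that `qpow` becomes powers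
  rw [show I * z * (((2 * (k + 1) : ℕ) : ℂ) + 1) = I * z * ((2 * k + 3 : ℕ) : ℂ) by push_cast; ring,
    show -(I * z) * (((2 * (k + 1) : ℕ) : ℂ) + 1) = -(I * z * ((2 * k + 3 : ℕ) : ℂ)) by push_cast; ring,
    show I * z * (((2 * (k + 1) : ℕ) : ℂ) - 1) = I * z * ((2 * k + 1 : ℕ) : ℂ) by push_cast; ring,
    show -(I * z) * (((2 * (k + 1) : ℕ) : ℂ) - 1) = -(I * z * ((2 * k + 1 : ℕ) : ℂ)) by push_cast; ring,
    show 1 - ((2 * (k + 1) : ℕ) : ℂ) / 2 = 1 + -(1 * ((k + 1 : ℕ) : ℂ)) by push_cast; ring,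
    show -((2 * (k + 1) : ℕ) : ℂ) / 2 = -(1 * ((k + 1 : ℕ) : ℂ)) by push_cast; ring]
  simp only [qpow_add, qpow_neg, qpow_mul_natCast, qpow_one hq]
  have hu : qpow q (I * z) ≠ 0 := exp_ne_zero _
  generalize qpow q (I * z) = u at *
  field_simp
  linear_combination -u ^ (4 * k + 4) * sub_one_mul_sphPoly (q : ℂ) (k + 1) (u ^ 2)

theorem phiSph_two_mul_eq_ofReal (q : ℝ) (hq : 0 < q) (z : ℂ) {m : ℕ} (hm : 1 ≤ m) {r : ℝ}
    (hr : r ≠ 1) (hz : qpow q (I * z) ^ 2 = r) :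
    phiSph q z (2 * m) = (((q + 1) * q ^ m)⁻¹ * (r ^ m)⁻¹ * sphPoly q m r : ℝ) := by
  rw [phiSph_two_mul q hq z hm (by rw [hz]; exact_mod_cast hr), hz, sphPoly_ofReal]
  push_cast
  rfl

theorem norm_phiSph_two_mul_lt (q : ℝ) (hq : 1 < q) (z : ℂ) {m : ℕ} (hm : 1 ≤ m)
    (hz : (qpow q (I * z) ^ 2).re < ‖qpow q (I * z) ^ 2‖) :
    ‖phiSph q z (2 * m)‖ <
      ((q + 1) * q ^ m)⁻¹ * (‖qpow q (I * z) ^ 2‖ ^ m)⁻¹ * sphPoly q m ‖qpow q (I * z) ^ 2‖ := by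
  have hw1 : qpow q (I * z) ^ 2 ≠ 1 := fun h => by simp [h] at hz
  have hw0 : qpow q (I * z) ^ 2 ≠ 0 := pow_ne_zero _ (exp_ne_zero _)
  rw [phiSph_two_mul q (by linarith) z hm hw1, norm_mul, norm_mul, norm_inv, norm_inv, norm_pow,
    norm_mul, norm_pow, norm_real, Real.norm_of_nonneg (by linarith),
    ← ofReal_one, ← ofReal_add, norm_real, Real.norm_of_nonneg (by linarith)]
  gcongr
  exact norm_sphPoly_lt hq hm hz

theorem qpow_I_mul_sq (q α δ : ℝ) :
    qpow q (I * (α + I * δ)) ^ 2 =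
      (Real.exp (-2 * δ * Real.log q) : ℂ) * exp ((2 * α * Real.log q : ℝ) * I) := by
  rw [qpow, ← exp_nat_mul, ofReal_exp, ← exp_add]
  congr 1
  push_cast
  linear_combination 2 * (δ : ℂ) * Real.log q * I_sq

theorem re_lt_norm_ofReal_mul_exp {r θ : ℝ} (hr : 0 < r) (hθ₁ : -(2 * Real.pi) < θ)
    (hθ₂ : θ < 2 * Real.pi) (hθ : θ ≠ 0) :
    ((r : ℂ) * exp (θ * I)).re < ‖(r : ℂ) * exp (θ * I)‖ := by
  rw [re_ofReal_mul, exp_ofReal_mul_I_re, norm_mul, norm_exp_ofReal_mul_I, norm_real,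
    Real.norm_of_nonneg hr.le, mul_one]
  have hcos : Real.cos θ ≠ 1 := fun h => hθ ((Real.cos_eq_one_iff_of_lt_of_lt hθ₁ hθ₂).mp h)
  nlinarith [Real.cos_le_one θ, lt_of_le_of_ne (Real.cos_le_one θ) hcos]

/-- For `δ ∈ [-1/2, 0)` and every `m ≥ 1`: `φ_{iδ}(2m)` is a positive real,
`|φ_{α+iδ}(2m)| < φ_{iδ}(2m)` for real `α ∈ (-τ/2, τ/2) \ {0}`, and
`φ_{τ/2+iδ}(2m) = φ_{iδ}(2m)`. -/
theorem stmt10 (q : ℝ) (hq : 1 < q) (δ : ℝ) (hδ : δ ∈ Set.Ico (-(1/2) : ℝ) 0) (m : ℕ) (hm : 1 ≤ m) :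
    ((phiSph q (Complex.I * (δ : ℂ)) (2 * m)).im = 0 ∧
      0 < (phiSph q (Complex.I * (δ : ℂ)) (2 * m)).re) ∧
    (∀ α : ℝ, -(tauq q) / 2 < α → α < tauq q / 2 → α ≠ 0 →
      ‖phiSph q ((α : ℂ) + Complex.I * (δ : ℂ)) (2 * m)‖ <
        (phiSph q (Complex.I * (δ : ℂ)) (2 * m)).re) ∧
    phiSph q (((tauq q / 2 : ℝ) : ℂ) + Complex.I * (δ : ℂ)) (2 * m) =
      phiSph q (Complex.I * (δ : ℂ)) (2 * m) := by
  have hL : 0 < Real.log q := Real.log_pos hq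
  set r := Real.exp (-2 * δ * Real.log q)
  have hr : 1 < r := Real.one_lt_exp_iff.mpr (by nlinarith [hδ.2])
  have hφ₀ := phiSph_two_mul_eq_ofReal q (by linarith) (I * δ) hm hr.ne'
    (by rw [show I * (δ : ℂ) = (0 : ℝ) + I * δ by simp, qpow_I_mul_sq]; simp [r])
  have hτ : tauq q / 2 * Real.log q = Real.pi := by rw [tauq]; field_simp
  refine ⟨⟨by rw [hφ₀, ofReal_im], ?_⟩, fun α hα₁ hα₂ hα₀ => ?_, ?_⟩
  · rw [hφ₀, ofReal_re]
    have := sphPoly_pos hq.le m (by linarith : 0 ≤ r)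
    positivity
  · have hw := qpow_I_mul_sq q α δ
    have hre := re_lt_norm_ofReal_mul_exp (by linarith : 0 < r) (θ := 2 * α * Real.log q)
      (by nlinarith) (by nlinarith) (by positivity)
    have hnorm : ‖qpow q (I * (α + I * δ)) ^ 2‖ = r := by
      rw [hw, norm_mul, norm_exp_ofReal_mul_I, norm_real, Real.norm_of_nonneg (by linarith), mul_one]
    rw [← hw] at hre
    rw [hφ₀, ofReal_re, ← hnorm]
    exact norm_phiSph_two_mul_lt q hq _ hm hre
  · rw [phiSph_two_mul_eq_ofReal q (by linarith) _ hm hr.ne', hφ₀]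
    rw [qpow_I_mul_sq, show 2 * (tauq q / 2) * Real.log q = 2 * Real.pi by linarith]
    simp [r]
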